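/- Let k and l be integers ≥ 2 of opposite parity, with k ≥ 2l+1 if k is odd and k ≥ 2l−2 if k is even, and let d = (3k+l+1)/2. If l = 2 or l = 3, then any two symmetric (d,k) circuit codes in F(d,k,k+l) of maximum length S(d,k,k+l) = 4k+2l are isomorphic. -/

import Mathlib

/-- The graph of the `d`-dimensional hypercube: vertices are binary vectors of
length `d`, adjacent iff they differ in exactly one coordinate. -/
def hypercube (d : ℕ) : SimpleGraph (Fin d → Bool) where
  Adj x y := hammingDist x y = 1
  symm := by
    constructor
    intro x y h
    rwa [hammingDist_comm]
  loopless := by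
    constructor
    intro x h
    simp [hammingDist_self] at h

/-- Distance along a cycle of length `N` between positions `i` and `j`. -/
def cycDist {N : ℕ} (i j : ZMod N) : ℕ := min (i - j).val (j - i).val

/-- `x : ZMod N → (Fin d → Bool)` is a `(d,k)` circuit code of length `N`:
a cycle in the hypercube `I(d)` satisfying the spread-`k` distance requirement. -/
structure IsCircuitCode (d k N : ℕ) (x : ZMod N → Fin d → Bool) : Prop where
  inj : Function.Injective x
  adj : ∀ i : ZMod N, (hypercube d).Adj (x i) (x (i + 1))
  spread : ∀ i j : ZMod N, min (cycDist i j) k ≤ (hypercube d).dist (x i) (x j)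

/-- `τ` is the transition sequence of the cycle `x`: `τ i` is the unique
coordinate in which `x i` and `x (i+1)` differ. -/
def IsTransitionSeq {d N : ℕ} (x : ZMod N → Fin d → Bool) (τ : ZMod N → Fin d) : Prop :=
  ∀ (i : ZMod N) (j : Fin d), x (i + 1) j ≠ x i j ↔ j = τ i

/-- The segment of `τ` of length `m` starting at position `start` is a bit run:
all of its entries are distinct. -/
def IsBitRun {d N : ℕ} (τ : ZMod N → Fin d) (start : ZMod N) (m : ℕ) : Prop :=
  ∀ a b : Fin m, τ (start + ((a : ℕ) : ZMod N)) = τ (start + ((b : ℕ) : ZMod N)) → a = b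

/-- `δ(ω)`: the number of coordinates appearing an odd number of times in the
segment of `τ` of length `m` starting at `start`. -/
def segDelta {d N : ℕ} (τ : ZMod N → Fin d) (start : ZMod N) (m : ℕ) : ℕ :=
  (Finset.univ.filter fun c : Fin d =>
    Odd (Finset.univ.filter fun t : Fin m => τ (start + ((t : ℕ) : ZMod N)) = c).card).card

open Finset

/-!
Read the transition sequence from the start of a bit run of length `k + l` as a word of period
`2 k + l` (the code is symmetric). The spread condition says that a window of length
`L ≤ 2 k + l` in which `D` letters repeat satisfies `min L k + 2 D ≤ L`; in particular equal
letters are more than `k` apart both ways round the period. So the slot `j < k` at position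
`k + l + j` carries either a fresh letter or the run letter at position `j + 1` or `j + 2`, and
since there are only `d = (3 k + l + 1) / 2` letters, exactly `(k + l - 1) / 2` slots are
paired. Windows spanning an increasing family of pairs pin the pairing down: the run letters
`1, 3, 5, …` are repeated, at the slots `0, 2, …, 2 t` and then `2 t + 1, 2 t + 3, …`. For
`l = 2` this forces `2 t + 1 = k`; for `l = 3`, moving the start two places to the right lowers
`t` by one. Hence every such code is, up to a shift and a renaming of the coordinates, the same
canonical word.
-/

theorem exists_perm_apply_eq_of_forall_eq_iff {ι β : Type*} [Fintype β]
    {f g : ι → β} (h : ∀ a b, f a = f b ↔ g a = g b) :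
    ∃ π : Equiv.Perm β, ∀ a, g a = π (f a) := by
  classical
  let e : Set.range f ≃ Set.range g :=
    (Setoid.quotientKerEquivRange f).symm.trans
      ((Quotient.congrRight h).trans (Setoid.quotientKerEquivRange g))
  refine ⟨e.extendSubtype, fun a => ?_⟩
  rw [Equiv.extendSubtype_apply_of_mem e (f a) ⟨a, rfl⟩]
  have : (Setoid.quotientKerEquivRange f).symm ⟨f a, a, rfl⟩ = ⟦a⟧ :=
    (Equiv.symm_apply_eq _).2 rfl
  simp only [Equiv.trans_apply, this, e]
  rfl

section Hypercube

variable {d : ℕ}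

lemma hammingDist_update_add_one {x y : Fin d → Bool} {j : Fin d} (hj : x j ≠ y j) :
    hammingDist (Function.update x j (y j)) y + 1 = hammingDist x y := by
  have : ({i | Function.update x j (y j) i ≠ y i} : Finset (Fin d)) =
      ({i | x i ≠ y i} : Finset (Fin d)).erase j := by
    ext i
    rcases eq_or_ne i j with rfl | hij <;> simp [*]
  rw [hammingDist, this, card_erase_add_one (by simpa using hj), hammingDist]

lemma hypercube_adj_update {x : Fin d → Bool} {j : Fin d} {b : Bool} (hb : x j ≠ b) :
    (hypercube d).Adj x (Function.update x j b) := by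
  have : ({i | x i ≠ Function.update x j b i} : Finset (Fin d)) = {j} := by
    ext i
    rcases eq_or_ne i j with rfl | hij <;> simp [*]
  show hammingDist _ _ = 1
  rw [hammingDist, this, card_singleton]

lemma exists_walk_length_eq_hammingDist (x y : Fin d → Bool) :
    ∃ p : (hypercube d).Walk x y, p.length = hammingDist x y := by
  induction h : hammingDist x y generalizing x with
  | zero =>
    obtain rfl := hammingDist_eq_zero.1 h
    exact ⟨.nil, rfl⟩
  | succ n ih =>
    have hxy : hammingDist x y ≠ 0 := h ▸ n.succ_ne_zero
    obtain ⟨j, hj⟩ := Function.ne_iff.1 (hammingDist_ne_zero.1 hxy)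
    have := hammingDist_update_add_one hj
    obtain ⟨p, hp⟩ := ih (Function.update x j (y j)) (by omega)
    exact ⟨.cons (hypercube_adj_update hj) p, by simp [hp]⟩

lemma hypercube_dist_le_hammingDist (x y : Fin d → Bool) :
    (hypercube d).dist x y ≤ hammingDist x y := by
  obtain ⟨p, hp⟩ := exists_walk_length_eq_hammingDist x y
  exact hp ▸ SimpleGraph.dist_le p

end Hypercube

section CircuitCode

variable {d k N : ℕ} {x : ZMod N → Fin d → Bool} {τ : ZMod N → Fin d}

lemma IsTransitionSeq.apply_add_ne_iff (hτ : IsTransitionSeq x τ) (i : ZMod N) (m : ℕ)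
    (c : Fin d) : x (i + m) c ≠ x i c ↔ Odd #{t ∈ range m | τ (i + (t : ℕ)) = c} := by
  induction m with
  | zero => simp
  | succ m ih =>
    have hcast : i + ((m + 1 : ℕ) : ZMod N) = i + m + 1 := by push_cast; ring
    rw [hcast, range_add_one, filter_insert]
    have hstep := hτ (i + m) c
    by_cases hm : τ (i + m) = c
    · rw [if_pos hm, card_insert_of_notMem (by simp), Nat.odd_add_one, ← ih]
      revert hstep
      cases x (i + m + 1) c <;> cases x (i + m) c <;> cases x i c <;> simp [hm]
    · rw [if_neg hm, ← ih]
      have : x (i + m + 1) c = x (i + m) c := by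
        by_contra h
        exact hm (hstep.1 h).symm
      rw [this]

lemma card_filter_odd_add_two_mul_card_le {ι α : Type*} [Fintype α] [DecidableEq α]
    (s : Finset ι) (g : ι → α) (T : Finset α) (hT : ∀ c ∈ T, 2 ≤ #{i ∈ s | g i = c}) :
    #{c | Odd #{i ∈ s | g i = c}} + 2 * #T ≤ #s := by
  have hpoint : ∀ c, ((if Odd #{i ∈ s | g i = c} then 1 else 0) + 2 * if c ∈ T then 1 else 0)
      ≤ #{i ∈ s | g i = c} := by
    intro c
    by_cases hc : c ∈ T
    · have := hT c hc
      split_ifs with hodd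
      · obtain ⟨a, ha⟩ := hodd
        omega
      · omega
    · split_ifs with hodd
      · exact hodd.pos
      · omega
  calc #{c | Odd #{i ∈ s | g i = c}} + 2 * #T
      = ∑ c, ((if Odd #{i ∈ s | g i = c} then 1 else 0) + 2 * if c ∈ T then 1 else 0) := by
        rw [sum_add_distrib, ← mul_sum, sum_boole, sum_boole, filter_mem_eq_inter, univ_inter]
        rfl
    _ ≤ ∑ c, #{i ∈ s | g i = c} := sum_le_sum fun c _ => hpoint c
    _ = #s := (card_eq_sum_card_fiberwise fun i _ => mem_univ (g i)).symm

/-- The window of length `m` starting at `i` changes exactly the coordinates occurring an odd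
number of times in it, so the spread condition bounds their number from below. -/
lemma IsCircuitCode.min_le_card_odd (hx : IsCircuitCode d k N x) (hτ : IsTransitionSeq x τ)
    (i : ZMod N) {m : ℕ} (hm : 2 * m ≤ N) :
    min m k ≤ #{c | Odd #{t ∈ range m | τ (i + (t : ℕ)) = c}} := by
  rcases Nat.eq_zero_or_pos m with rfl | hm0
  · simp
  have : NeZero N := ⟨by omega⟩
  have hval : (m : ZMod N).val = m := ZMod.val_natCast_of_lt (by omega)
  have hcyc : cycDist i (i + m) = m := by
    have hne : (m : ZMod N) ≠ 0 := fun h => by simp [h] at hval; omega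
    simp only [cycDist, sub_add_cancel_left, add_sub_cancel_left, ZMod.neg_val, if_neg hne, hval]
    omega
  have hham :
      hammingDist (x i) (x (i + m)) = #{c | Odd #{t ∈ range m | τ (i + (t : ℕ)) = c}} := by
    simp only [hammingDist, ← hτ.apply_add_ne_iff, ne_comm]
  calc min m k = min (cycDist i (i + m)) k := by rw [hcyc]
    _ ≤ (hypercube d).dist (x i) (x (i + m)) := hx.spread _ _
    _ ≤ _ := hham ▸ hypercube_dist_le_hammingDist _ _

end CircuitCode

/-- The window inequality satisfied by the transition sequence of a spread-`k` circuit code of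
length at least `2 P`, read as a word from any start (`IsCircuitCode.isSpreadWord`). -/
def IsSpreadWord {α : Type*} (k P : ℕ) (W : ℕ → α) : Prop :=
  ∀ (i L : ℕ) (T : Finset α), L ≤ P →
    (∀ c ∈ T, ∃ a b, i ≤ a ∧ a < b ∧ b < i + L ∧ W a = c ∧ W b = c) →
      min L k + 2 * #T ≤ L

lemma IsCircuitCode.isSpreadWord {d k N P : ℕ} {x : ZMod N → Fin d → Bool}
    {τ : ZMod N → Fin d} (hx : IsCircuitCode d k N x) (hτ : IsTransitionSeq x τ) (s : ZMod N)
    (hP : 2 * P ≤ N) : IsSpreadWord k P fun n : ℕ => τ (s + n) := by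
  intro i L T hL hT
  have hshift : ∀ n, i ≤ n → τ (s + i + ((n - i : ℕ) : ZMod N)) = τ (s + n) := by
    intro n hn
    rw [Nat.cast_sub hn, add_assoc, add_sub_cancel]
  have hodd := hx.min_le_card_odd hτ (s + i) (by omega : 2 * L ≤ N)
  have hcount := card_filter_odd_add_two_mul_card_le (range L)
    (fun t : ℕ => τ (s + i + t)) T fun c hc => by
      obtain ⟨a, b, hia, hab, hbL, rfl, hb⟩ := hT c hc
      refine one_lt_card.2 ⟨a - i, ?_, b - i, ?_, by omega⟩ <;>
        simp only [mem_filter, mem_range, hshift a hia, hshift b (by omega), hb] <;>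
        exact ⟨by omega, trivial⟩
  rw [card_range] at hcount
  omega

section SpreadWord

variable {α : Type*} {k P : ℕ} {W : ℕ → α}

lemma IsSpreadWord.lt_sub_of_apply_eq (hW : IsSpreadWord k P W) {a b : ℕ} (hab : a < b)
    (hb : b < a + P) (h : W a = W b) : k < b - a := by
  have := hW a (b - a + 1) {W a} (by omega) fun c hc => by
    rw [mem_singleton] at hc
    exact ⟨a, b, le_rfl, hab, by omega, hc.symm, h.symm.trans hc.symm⟩
  rw [card_singleton] at this
  omega

lemma IsSpreadWord.eq_of_apply_eq (hW : IsSpreadWord k P W) (hkP : k < P) {a b : ℕ}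
    (hab : a ≤ b) (hb : b ≤ a + k) (h : W a = W b) : a = b := by
  by_contra hne
  have := hW.lt_sub_of_apply_eq (by omega) (by omega) h
  omega

lemma IsSpreadWord.add_two_mul_card_le (hW : IsSpreadWord k P W) {ι : Type*} {M : Finset ι}
    {g : ι → α} (hg : Set.InjOn g M) {i L : ℕ} (hkL : k ≤ L) (hLP : L ≤ P)
    (h : ∀ m ∈ M, ∃ a b, i ≤ a ∧ a < b ∧ b < i + L ∧ W a = g m ∧ W b = g m) :
    k + 2 * #M ≤ L := by
  classical
  have := hW i L (M.image g) hLP (by simpa using h)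
  rwa [card_image_of_injOn hg, min_eq_right hkL] at this

end SpreadWord

section Pairing

variable {α : Type*} {k l : ℕ} {W : ℕ → α}

/-- `j` enumerates increasingly `r` slots, at positions `k + l + j m` after the run
`[0, k + l)`, whose letters occur in the run, at positions `q m`. -/
structure IsPairing (k l : ℕ) (W : ℕ → α) (r : ℕ) (j q : ℕ → ℕ) : Prop where
  strictMonoOn : StrictMonoOn j (Set.Iio r)
  slot_lt : ∀ m < r, j m < k
  slot_lt_partner : ∀ m < r, j m < q m
  partner_lt : ∀ m < r, q m < j m + l
  apply_partner : ∀ m < r, W (q m) = W (k + l + j m)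
  injOn : Set.InjOn (fun m => W (q m)) (Set.Iio r)

namespace IsPairing

variable {r : ℕ} {j q : ℕ → ℕ}

lemma slot_le_slot (hp : IsPairing k l W r j q) {m m' : ℕ} (h : m ≤ m') (hm' : m' < r) :
    j m ≤ j m' :=
  hp.strictMonoOn.monotoneOn (h.trans_lt hm') hm' h

lemma partner_lt_partner (hp : IsPairing k l W r j q) (hl : l ≤ 3) {m m' : ℕ} (h : m < m')
    (hm' : m' < r) : q m < q m' := by
  have hj := hp.strictMonoOn (h.trans hm') hm' h
  have h1 := hp.partner_lt m (h.trans hm')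
  have h2 := hp.slot_lt_partner m' hm'
  have hne : q m ≠ q m' := fun hq => h.ne (hp.injOn (h.trans hm') hm' (by simp only [hq]))
  omega

lemma partner_le_partner (hp : IsPairing k l W r j q) (hl : l ≤ 3) {m m' : ℕ} (h : m ≤ m')
    (hm' : m' < r) : q m ≤ q m' := by
  rcases h.eq_or_lt with rfl | h
  · exact le_rfl
  · exact (hp.partner_lt_partner hl h hm').le

lemma injOn_range (hp : IsPairing k l W r j q) (M : Finset ℕ) (hM : ∀ m ∈ M, m < r) :
    Set.InjOn (fun m => W (q m)) M :=
  hp.injOn.mono fun m hm => hM m hm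

variable (hW : IsSpreadWord k (2 * k + l) W) (hper : Function.Periodic W (2 * k + l))
  (hl : l ≤ 3)
include hW hl

/-- The window `[q 0, 2 k + l)` contains all `r` pairs. -/
lemma partner_zero_add_le (hp : IsPairing k l W r j q) (hr : 0 < r) :
    q 0 + k + 2 * r ≤ 2 * k + l := by
  have hq0 := hp.partner_lt 0 hr
  have hj0 := hp.slot_lt 0 hr
  have := hW.add_two_mul_card_le (hp.injOn_range (range r) fun m => mem_range.1)
    (i := q 0) (L := 2 * k + l - q 0) (by omega) (by omega) fun m hm => by
      rw [mem_range] at hm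
      have hqm := hp.partner_le_partner hl m.zero_le hm
      have hqm' := hp.partner_lt m hm
      have hjm := hp.slot_lt m hm
      exact ⟨q m, k + l + j m, hqm, by omega, by omega, rfl, (hp.apply_partner m hm).symm⟩
  rw [card_range] at this
  omega

include hper

/-- The window from slot `j 0` to the next copy of `q m` contains the pairs `m' ≤ m`. -/
lemma two_mul_add_slot_zero_lt_partner (hp : IsPairing k l W r j q) {m : ℕ} (hm : m < r) :
    2 * m + j 0 < q m := by
  have hqm := hp.partner_lt m hm
  have hjqm := hp.slot_lt_partner m hm
  have hjm := hp.slot_lt m hm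
  have hj0 := hp.slot_le_slot m.zero_le hm
  have := hW.add_two_mul_card_le (hp.injOn_range (range (m + 1)) fun m' hm' => by
      rw [mem_range] at hm'; omega)
    (i := k + l + j 0) (L := k + q m + 1 - j 0) (by omega) (by omega) fun m' hm' => by
      rw [mem_range] at hm'
      have := hp.slot_le_slot m'.zero_le (by omega : m' < r)
      have := hp.slot_lt m' (by omega)
      have := hp.partner_le_partner hl (by omega : m' ≤ m) hm
      exact ⟨k + l + j m', q m' + (2 * k + l), by omega, by omega, by omega,
        (hp.apply_partner m' (by omega)).symm, hper _⟩
  rw [card_range] at this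
  omega

/-- The window from `q m` to the next copy of `q 0` contains the pairs `m' ≥ m` and, across
the period boundary, the pair `0`. -/
lemma partner_add_le (hp : IsPairing k l W r j q) {m : ℕ} (hm0 : 0 < m) (hm : m < r) :
    q m + k + 2 * (r - m) + 1 ≤ 2 * k + l + q 0 := by
  have hqm := hp.partner_lt m hm
  have hjm := hp.slot_lt m hm
  have hq0 := hp.partner_lt_partner hl hm0 hm
  have hcard : #(insert 0 (Ico m r)) = r - m + 1 := by
    rw [card_insert_of_notMem (by simp; omega), Nat.card_Ico]
  have := hW.add_two_mul_card_le (hp.injOn_range (insert 0 (Ico m r)) fun m' hm' => by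
      simp only [mem_insert, mem_Ico] at hm'; omega)
    (i := q m) (L := 2 * k + l + q 0 + 1 - q m) (by omega) (by omega) fun m' hm' => by
      simp only [mem_insert, mem_Ico] at hm'
      rcases hm' with rfl | ⟨hmm', hm'r⟩
      · have := hp.slot_lt 0 (by omega)
        exact ⟨k + l + j 0, q 0 + (2 * k + l), by omega, by omega, by omega,
          (hp.apply_partner 0 (by omega)).symm, hper _⟩
      · have hqm' := hp.partner_le_partner hl hmm' hm'r
        have hjm' := hp.slot_lt m' hm'r
        have hqm'' := hp.partner_lt m' hm'r
        exact ⟨q m', k + l + j m', hqm', by omega, by omega, rfl,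
          (hp.apply_partner m' hm'r).symm⟩
  omega

/-- The window from slot `j (m + 1)` to the next copy of slot `j m` contains all pairs, those
with `m' ≤ m` in the next period. -/
lemma slot_succ_add_le (hp : IsPairing k l W r j q) {m : ℕ} (hm : m + 1 < r) :
    k + 2 * r + j (m + 1) ≤ 2 * k + l + j m + 1 := by
  have hjm := hp.strictMonoOn (show m < r by omega) hm (show m < m + 1 by omega)
  have hjm1 := hp.slot_lt (m + 1) hm
  have := hW.add_two_mul_card_le (hp.injOn_range (range r) fun m => mem_range.1)
    (i := k + l + j (m + 1)) (L := 2 * k + l + j m + 1 - j (m + 1)) (by omega) (by omega)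
    fun m' hm' => by
      rw [mem_range] at hm'
      have hq := hp.partner_lt m' hm'
      have hjm' := hp.slot_lt m' hm'
      rcases le_or_gt m' m with h | h
      · have := hp.slot_le_slot h (by omega : m < r)
        exact ⟨q m' + (2 * k + l), k + l + j m' + (2 * k + l), by omega, by omega, by omega,
          hper _, by rw [hper, hp.apply_partner m' hm']⟩
      · have := hp.slot_le_slot (show m + 1 ≤ m' by omega) hm'
        exact ⟨k + l + j m', q m' + (2 * k + l), by omega, by omega, by omega,
          (hp.apply_partner m' hm').symm, hper _⟩
  rw [card_range] at this
  omega

lemma partner_eq (hp : IsPairing k l W r j q) (hr : 2 * r + 1 = k + l) {m : ℕ} (hm : m < r) :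
    q m = 2 * m + 1 := by
  have hA := hp.partner_zero_add_le hW hl (by omega)
  have hq0 := hp.slot_lt_partner 0 (by omega)
  have hB := hp.two_mul_add_slot_zero_lt_partner hW hper hl hm
  rcases Nat.eq_zero_or_pos m with rfl | hm0
  · omega
  · have hC := hp.partner_add_le hW hper hl hm0 hm
    omega

omit hl in
/-- Since `q m = 2 m + 1`, the slot `j m` is `2 m` or lags one place behind it, and by
`slot_succ_add_le` a lag persists once it occurs. -/
lemma exists_slot_eq (hp : IsPairing k l W r j q) (hl : l = 2 ∨ l = 3)
    (hr : 2 * r + 1 = k + l) :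
    ∃ t, (l = 2 → 2 * t + 1 = k) ∧ (l = 3 → 2 * t + 2 ≤ k) ∧
      ∀ m < r, j m = if m ≤ t then 2 * m else 2 * m - 1 := by
  have hl3 : l ≤ 3 := by omega
  have hj : ∀ m < r, j m = 2 * m ∨ (j m + 1 = 2 * m ∧ l = 3) := fun m hm => by
    have := hp.partner_eq hW hper hl3 hr hm
    have := hp.slot_lt_partner m hm
    have := hp.partner_lt m hm
    omega
  have hdown : ∀ m, m + 1 < r → j (m + 1) = 2 * (m + 1) → j m = 2 * m := fun m hm h => by
    have := hp.slot_succ_add_le hW hper hl3 hm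
    have := hj m (by omega)
    omega
  have hj0 : j 0 = 0 := by
    have := hj 0 (by omega)
    omega
  set t := Nat.findGreatest (fun m => j m = 2 * m) (r - 1)
  have htr : t ≤ r - 1 := Nat.findGreatest_le _
  have hjt : j t = 2 * t :=
    Nat.findGreatest_spec (P := fun m => j m = 2 * m) (Nat.zero_le _) (by simp [hj0])
  have hprefix : ∀ n m, m + n = t → j m = 2 * m := by
    intro n
    induction n with
    | zero => intro m hm; rw [show m = t by omega]; exact hjt
    | succ n ih => intro m hm; exact hdown m (by omega) (ih (m + 1) (by omega))
  have hiff : ∀ m < r, j m = 2 * m ↔ m ≤ t := fun m hm =>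
    ⟨fun h => Nat.le_findGreatest (by omega) h, fun h => hprefix (t - m) m (by omega)⟩
  refine ⟨t, fun hl2 => ?_, fun hl3 => ?_, fun m hm => ?_⟩
  · have := hj (r - 1) (by omega)
    have := hiff (r - 1) (by omega)
    omega
  · have := hp.slot_lt (r - 1) (by omega)
    have := hiff (r - 1) (by omega)
    omega
  · have := hiff m hm
    have := hj m hm
    split_ifs <;> omega

end IsPairing

end Pairing

section RunWord

variable {α : Type*} {k l : ℕ} {W : ℕ → α}

lemma IsSpreadWord.partner_bounds (hW : IsSpreadWord k (2 * k + l) W)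
    (hper : Function.Periodic W (2 * k + l)) {i j : ℕ} (hj : j < k) (hi : i < k + l)
    (h : W i = W (k + l + j)) : j < i ∧ i < j + l := by
  have h1 := hW.lt_sub_of_apply_eq (a := k + l + j) (b := i + (2 * k + l)) (by omega) (by omega)
    (by rw [hper, h])
  have h2 := hW.lt_sub_of_apply_eq (a := i) (b := k + l + j) (by omega) (by omega) h
  omega

lemma IsSpreadWord.injOn_slots (hW : IsSpreadWord k (2 * k + l) W) (hl : 0 < l) :
    Set.InjOn (fun j => W (k + l + j)) (Set.Iio k) := by
  intro a ha b hb h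
  rcases le_total a b with hab | hab
  · have := hW.eq_of_apply_eq (by omega) (a := k + l + a) (b := k + l + b) (by omega)
      (by simp only [Set.mem_Iio] at ha hb; omega) h
    omega
  · have := hW.eq_of_apply_eq (by omega) (a := k + l + b) (b := k + l + a) (by omega)
      (by simp only [Set.mem_Iio] at ha hb; omega) h.symm
    omega

/-- The slots `j < k` (at position `k + l + j`) whose letter already occurs in the run. -/
def pairedSlots [DecidableEq α] (k l : ℕ) (W : ℕ → α) : Finset ℕ :=
  {j ∈ range k | ∃ i < k + l, W i = W (k + l + j)}

/-- Run letters and letters of unpaired slots are pairwise distinct. -/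
lemma IsSpreadWord.le_card_add_card_pairedSlots [Fintype α] [DecidableEq α]
    (hW : IsSpreadWord k (2 * k + l) W) (hl : 0 < l) (hrun : Set.InjOn W (Set.Iio (k + l))) :
    2 * k + l ≤ Fintype.card α + #(pairedSlots k l W) := by
  set S := pairedSlots k l W
  have hSk : S ⊆ range k := filter_subset _ _
  have hdisj : Disjoint ((range (k + l)).image W) ((range k \ S).image fun j => W (k + l + j)) := by
    rw [disjoint_left]
    rintro c hc1 hc2
    obtain ⟨i, hi, rfl⟩ := mem_image.1 hc1
    obtain ⟨j, hj, hji⟩ := mem_image.1 hc2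
    rw [mem_sdiff] at hj
    exact hj.2 (mem_filter.2 ⟨hj.1, i, mem_range.1 hi, hji.symm⟩)
  have hrun' : #((range (k + l)).image W) = k + l := by
    rw [card_image_of_injOn (by rwa [coe_range]), card_range]
  have hslots : #((range k \ S).image fun j => W (k + l + j)) = k - #S := by
    rw [card_image_of_injOn ((hW.injOn_slots hl).mono fun j hj => mem_range.1 (mem_sdiff.1 hj).1),
      card_sdiff_of_subset hSk, card_range]
  have := card_le_univ ((range (k + l)).image W ∪ (range k \ S).image fun j => W (k + l + j))
  rw [card_union_of_disjoint hdisj] at this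
  have := card_le_card hSk
  rw [card_range] at this
  omega

lemma IsSpreadWord.isPairing_nth [DecidableEq α] (hW : IsSpreadWord k (2 * k + l) W)
    (hper : Function.Periodic W (2 * k + l)) (hl : 0 < l) {p : ℕ → ℕ}
    (hp : ∀ j ∈ pairedSlots k l W, p j < k + l ∧ W (p j) = W (k + l + j)) :
    IsPairing k l W #(pairedSlots k l W) (Nat.nth (· ∈ pairedSlots k l W))
      (p ∘ Nat.nth (· ∈ pairedSlots k l W)) := by
  set S := pairedSlots k l W
  have hf : (Set.ofPred (· ∈ S)).Finite := S.finite_toSet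
  have hcardS : #hf.toFinset = #S := by simp
  have hmem : ∀ m < #S, Nat.nth (· ∈ S) m ∈ S := fun m hm =>
    Nat.nth_mem_of_lt_card hf (hcardS ▸ hm)
  have hslot : ∀ m < #S, Nat.nth (· ∈ S) m < k := fun m hm =>
    mem_range.1 (mem_filter.1 (hmem m hm)).1
  have hbounds : ∀ m < #S, _ := fun m hm =>
    hW.partner_bounds hper (hslot m hm) (hp _ (hmem m hm)).1 (hp _ (hmem m hm)).2
  refine
    { strictMonoOn := hcardS ▸ Nat.nth_strictMonoOn hf
      slot_lt := hslot
      slot_lt_partner := fun m hm => (hbounds m hm).1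
      partner_lt := fun m hm => (hbounds m hm).2
      apply_partner := fun m hm => (hp _ (hmem m hm)).2
      injOn := fun m hm m' hm' h => Nat.nth_injOn hf (hcardS ▸ hm) (hcardS ▸ hm') ?_ }
  refine hW.injOn_slots hl (hslot m hm) (hslot m' hm') ?_
  simp only [Function.comp_apply, (hp _ (hmem m hm)).2, (hp _ (hmem m' hm')).2] at h
  exact h

lemma IsSpreadWord.exists_pairing [Fintype α] (hW : IsSpreadWord k (2 * k + l) W)
    (hper : Function.Periodic W (2 * k + l)) (hrun : Set.InjOn W (Set.Iio (k + l)))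
    (hl : l = 2 ∨ l = 3) (hcard : 2 * Fintype.card α ≤ 3 * k + l + 1) :
    ∃ r j q, IsPairing k l W r j q ∧ 2 * r + 1 = k + l ∧
      ∀ a b, a < b → b < 2 * k + l → W a = W b →
        ∃ m < r, a = q m ∧ b = k + l + j m := by
  classical
  set S := pairedSlots k l W
  choose! p hp using fun j (hj : j ∈ S) => (mem_filter.1 hj).2
  have hpair : IsPairing k l W #S (Nat.nth (· ∈ S)) (p ∘ Nat.nth (· ∈ S)) :=
    hW.isPairing_nth hper (by omega) hp
  have hlower : 2 * k + l ≤ Fintype.card α + #S :=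
    hW.le_card_add_card_pairedSlots (by omega) hrun
  have hupper := hpair.partner_zero_add_le hW (by omega) (by omega)
  have hq0 := hpair.slot_lt_partner 0 (by omega)
  refine ⟨#S, Nat.nth (· ∈ S), p ∘ Nat.nth (· ∈ S), hpair, by omega, ?_⟩
  intro a b hab hb h
  have hbrun : k + l ≤ b := by
    by_contra hbk
    exact hab.ne (hrun (show a < k + l by omega) (show b < k + l by omega) h)
  have harun : a < k + l := by
    by_contra hak
    have := hW.eq_of_apply_eq (by omega) hab.le (by omega) h
    omega
  have hbS : b - (k + l) ∈ S :=
    mem_filter.2 ⟨mem_range.2 (by omega), a, harun, by rw [Nat.add_sub_cancel' hbrun, h]⟩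
  have hf : (Set.ofPred (· ∈ S)).Finite := S.finite_toSet
  obtain ⟨m, hm, hjm⟩ := Nat.exists_lt_card_finite_nth_eq hf hbS
  have hm' : m < #S := by simpa using hm
  refine ⟨m, hm', hrun harun (hp _ (hjm ▸ hbS)).1 ?_, by omega⟩
  rw [h, Function.comp_apply, hjm, (hp _ hbS).2, Nat.add_sub_cancel' hbrun]

end RunWord

section CanonicalWord

variable {k l : ℕ}

/-- The canonical word of period `2 k + l`: the run `0, …, k + l - 1`, then `k` slots, slot `j`
repeating the run letter `j + 1` (`j` even, `j ≤ 2 t`) or `j + 2` (`j` odd, `j > 2 t`), or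
else carrying the fresh letter `k + l + j`. -/
def canonicalLetter (k l t n : ℕ) : ℕ :=
  if n < k + l then n
  else if (n - (k + l)) % 2 = 0 ∧ n - (k + l) ≤ 2 * t then n - (k + l) + 1
  else if (n - (k + l)) % 2 = 1 ∧ 2 * t + 1 ≤ n - (k + l) then n - (k + l) + 2
  else n

lemma canonicalLetter_eq_canonicalLetter_iff (hl : 2 ≤ l) {t a b : ℕ} (hab : a < b)
    (hb : b < 2 * k + l) :
    canonicalLetter k l t a = canonicalLetter k l t b ↔
      ∃ m, 2 * m + 1 < k + l ∧ a = 2 * m + 1 ∧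
        b = k + l + if m ≤ t then 2 * m else 2 * m - 1 := by
  constructor
  · intro h
    unfold canonicalLetter at h
    refine ⟨a / 2, ?_⟩
    split_ifs at h <;> split_ifs <;> omega
  · rintro ⟨m, hm, rfl, rfl⟩
    unfold canonicalLetter
    split_ifs <;> omega

end CanonicalWord

theorem IsSpreadWord.exists_canonicalLetter_iff {α : Type*} [Fintype α] {k l : ℕ}
    {W : ℕ → α}
    (hW : IsSpreadWord k (2 * k + l) W) (hper : Function.Periodic W (2 * k + l))
    (hrun : Set.InjOn W (Set.Iio (k + l))) (hl : l = 2 ∨ l = 3)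
    (hcard : 2 * Fintype.card α ≤ 3 * k + l + 1) :
    ∃ t, (l = 2 → 2 * t + 1 = k) ∧ (l = 3 → 2 * t + 2 ≤ k) ∧ ∀ a b, a < 2 * k + l →
      b < 2 * k + l → (W a = W b ↔ canonicalLetter k l t a = canonicalLetter k l t b) := by
  obtain ⟨r, j, q, hp, hr, hsurj⟩ := hW.exists_pairing hper hrun hl hcard
  obtain ⟨t, ht2, ht3, hj⟩ := hp.exists_slot_eq hW hper hl hr
  have hq : ∀ m < r, q m = 2 * m + 1 := fun m hm => hp.partner_eq hW hper (by omega) hr hm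
  have key : ∀ a b, a < b → b < 2 * k + l →
      (W a = W b ↔ canonicalLetter k l t a = canonicalLetter k l t b) := by
    intro a b hab hb
    rw [canonicalLetter_eq_canonicalLetter_iff (by omega) hab hb]
    constructor
    · intro h
      obtain ⟨m, hm, rfl, rfl⟩ := hsurj a b hab hb h
      exact ⟨m, by omega, hq m hm, by rw [hj m hm]⟩
    · rintro ⟨m, hm, rfl, rfl⟩
      have hmr : m < r := by omega
      rw [← hq m hmr, ← hj m hmr]
      exact hp.apply_partner m hmr
  refine ⟨t, ht2, ht3, fun a b ha hb => ?_⟩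
  rcases lt_trichotomy a b with h | rfl | h
  · exact key a b h hb
  · exact iff_of_true rfl rfl
  · rw [eq_comm, key b a h ha, eq_comm]

section Shift

variable {k : ℕ}

/-- Moving the start of the canonical word (with `l = 3`) two places to the right turns the
parameter `t + 1` into `t`, up to this relabelling of letters. -/
def relabel (k v : ℕ) : ℕ :=
  if v = 0 then 2 * k + 1 else if v = 1 then k + 1 else if v = k + 4 then k + 2 else v - 2

lemma canonicalLetter_eq_relabel {t n : ℕ} (hk : Even k) (ht : 2 * t + 4 ≤ k)
    (hn : n < 2 * k + 3) :
    canonicalLetter k 3 t n = relabel k (canonicalLetter k 3 (t + 1) ((n + 2) % (2 * k + 3))) := by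
  obtain ⟨k', hk'⟩ := hk
  rcases Nat.lt_or_ge (n + 2) (2 * k + 3) with h | h
  · rw [Nat.mod_eq_of_lt h]
    unfold canonicalLetter relabel
    split_ifs <;> first | contradiction | omega
  · have hmod : (n + 2) % (2 * k + 3) = n + 2 - (2 * k + 3) := by
      rw [Nat.mod_eq_sub_mod h, Nat.mod_eq_of_lt (by omega)]
    rw [hmod, show canonicalLetter k 3 (t + 1) (n + 2 - (2 * k + 3)) = n + 2 - (2 * k + 3) from
      if_pos (by omega)]
    unfold canonicalLetter relabel
    split_ifs <;> first | contradiction | omega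

lemma relabel_injOn {v v' : ℕ} (hk : 0 < k) (hv : v < 2 * k + 3) (hv' : v' < 2 * k + 3)
    (hvk : v ≠ k + 3) (hvk' : v' ≠ k + 3) (h : relabel k v = relabel k v') : v = v' := by
  unfold relabel at h
  split_ifs at h <;> first | contradiction | omega

lemma canonicalLetter_lt_and_ne {t n : ℕ} (hn : n < 2 * k + 3) :
    canonicalLetter k 3 t n < 2 * k + 3 ∧ canonicalLetter k 3 t n ≠ k + 3 := by
  unfold canonicalLetter
  split_ifs <;> omega

end Shift

def canonicalWord (k l t n : ℕ) : ℕ :=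
  canonicalLetter k l t (n % (2 * k + l))

lemma canonicalWord_eq_iff_add_two {k t : ℕ} (hk : Even k) (ht : 2 * t + 4 ≤ k) (a b : ℕ) :
    canonicalWord k 3 t a = canonicalWord k 3 t b ↔
      canonicalWord k 3 (t + 1) (a + 2) = canonicalWord k 3 (t + 1) (b + 2) := by
  have key : ∀ n, canonicalWord k 3 t n = relabel k (canonicalWord k 3 (t + 1) (n + 2)) := by
    intro n
    rw [canonicalWord, canonicalWord, canonicalLetter_eq_relabel hk ht (Nat.mod_lt _ (by omega)),
      Nat.mod_add_mod]
  have hrange : ∀ n, canonicalWord k 3 (t + 1) n < 2 * k + 3 ∧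
      canonicalWord k 3 (t + 1) n ≠ k + 3 := fun n =>
    canonicalLetter_lt_and_ne (Nat.mod_lt _ (by omega))
  rw [key a, key b]
  exact ⟨relabel_injOn (by omega) (hrange _).1 (hrange _).1 (hrange _).2 (hrange _).2,
    congrArg _⟩

lemma canonicalWord_zero_eq_iff {k t : ℕ} (hk : Even k) (ht : 2 * t + 2 ≤ k) (a b : ℕ) :
    canonicalWord k 3 0 a = canonicalWord k 3 0 b ↔
      canonicalWord k 3 t (a + 2 * t) = canonicalWord k 3 t (b + 2 * t) := by
  induction t with
  | zero => rfl
  | succ t ih =>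
    rw [ih (by omega), canonicalWord_eq_iff_add_two hk (by omega), add_assoc, add_assoc]
    rfl

theorem IsCircuitCode.exists_canonicalWord_iff {k l d : ℕ} (hl : l = 2 ∨ l = 3)
    (hd : 2 * d = 3 * k + l + 1) {x : ZMod (4 * k + 2 * l) → Fin d → Bool}
    {τ : ZMod (4 * k + 2 * l) → Fin d} (hx : IsCircuitCode d k (4 * k + 2 * l) x)
    (hτ : IsTransitionSeq x τ)
    (hsym : ∀ i, τ (i + ((2 * k + l : ℕ) : ZMod (4 * k + 2 * l))) = τ i)
    {s : ZMod (4 * k + 2 * l)} (hrun : IsBitRun τ s (k + l)) :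
    ∃ s' : ZMod (4 * k + 2 * l), ∀ a b : ℕ, τ (s' + a) = τ (s' + b) ↔
      canonicalWord k l (if l = 2 then k / 2 else 0) a =
        canonicalWord k l (if l = 2 then k / 2 else 0) b := by
  set W : ℕ → Fin d := fun n => τ (s + n)
  have hW : IsSpreadWord k (2 * k + l) W := hx.isSpreadWord hτ s (by omega)
  have hper : Function.Periodic W (2 * k + l) := fun n => by
    show τ (s + ((n + (2 * k + l) : ℕ) : ZMod _)) = τ (s + n)
    rw [Nat.cast_add, ← add_assoc, hsym]
  have hrunW : Set.InjOn W (Set.Iio (k + l)) := fun a ha b hb h =>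
    congrArg Fin.val (hrun ⟨a, ha⟩ ⟨b, hb⟩ h)
  obtain ⟨t, ht2, ht3, hiff⟩ :=
    hW.exists_canonicalLetter_iff hper hrunW hl (by rw [Fintype.card_fin]; omega)
  have hall : ∀ a b : ℕ, W a = W b ↔ canonicalWord k l t a = canonicalWord k l t b := by
    intro a b
    rw [← hper.map_mod_nat a, ← hper.map_mod_nat b]
    exact hiff _ _ (Nat.mod_lt _ (by omega)) (Nat.mod_lt _ (by omega))
  rcases hl with rfl | rfl
  · refine ⟨s, fun a b => ?_⟩
    rw [if_pos rfl, show k / 2 = t by omega]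
    exact hall a b
  · refine ⟨s + (2 * t : ℕ), fun a b => ?_⟩
    rw [if_neg (by norm_num), canonicalWord_zero_eq_iff (by rw [Nat.even_iff]; omega) (ht3 rfl),
      ← hall]
    simp only [W, Nat.cast_add, add_assoc, add_comm (a : ZMod (4 * k + 2 * 3)),
      add_comm (b : ZMod (4 * k + 2 * 3))]

theorem stmt_8_general (k l d : ℕ) (hd : 2 * d = 3 * k + l + 1) (hl23 : l = 2 ∨ l = 3)
    (x x' : ZMod (4 * k + 2 * l) → Fin d → Bool)
    (hx : IsCircuitCode d k (4 * k + 2 * l) x)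
    (hx' : IsCircuitCode d k (4 * k + 2 * l) x')
    (τ τ' : ZMod (4 * k + 2 * l) → Fin d)
    (hτ : IsTransitionSeq x τ) (hτ' : IsTransitionSeq x' τ')
    (hsym : ∀ i : ZMod (4 * k + 2 * l),
      τ (i + ((2 * k + l : ℕ) : ZMod (4 * k + 2 * l))) = τ i)
    (hsym' : ∀ i : ZMod (4 * k + 2 * l),
      τ' (i + ((2 * k + l : ℕ) : ZMod (4 * k + 2 * l))) = τ' i)
    (hrun : ∃ s : ZMod (4 * k + 2 * l), IsBitRun τ s (k + l))
    (hrun' : ∃ s : ZMod (4 * k + 2 * l), IsBitRun τ' s (k + l)) :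
    ∃ (s : ZMod (4 * k + 2 * l)) (π : Equiv.Perm (Fin d)),
      ∀ i : ZMod (4 * k + 2 * l), τ' i = π (τ (i + s)) := by
  have : NeZero (4 * k + 2 * l) := ⟨by omega⟩
  obtain ⟨s₁, hs₁⟩ := hrun
  obtain ⟨s₂, hs₂⟩ := hrun'
  obtain ⟨u, hu⟩ := hx.exists_canonicalWord_iff hl23 hd hτ hsym hs₁
  obtain ⟨u', hu'⟩ := hx'.exists_canonicalWord_iff hl23 hd hτ' hsym' hs₂
  have hdecomp : ∀ (v z : ZMod (4 * k + 2 * l)), z = v + ((z - v).val : ℕ) := fun v z => by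
    rw [ZMod.natCast_zmod_val, add_sub_cancel]
  refine ⟨u - u', exists_perm_apply_eq_of_forall_eq_iff fun z w => ?_⟩
  have hshift : ∀ z : ZMod (4 * k + 2 * l), z + (u - u') = u + ((z - u').val : ℕ) := fun z => by
    rw [ZMod.natCast_zmod_val]
    ring
  rw [hshift, hshift, hu, ← hu', ← hdecomp, ← hdecomp]

/-- Byrnes, Theorem 6 (ii): for `k, l ≥ 2` of opposite parity with `k ≥ 2l+1` if `k`
is odd, `k ≥ 2l-2` if `k` is even, `d = (3k+l+1)/2`, and `l = 2` or `l = 3`, any two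
symmetric `(d,k)` circuit codes of maximum length `S(d,k,k+l) = 4k+2l` whose
transition sequences contain a bit run of length `≥ k+l` are isomorphic. -/
theorem stmt_8 (k l d : ℕ) (hk2 : 2 ≤ k) (hl2 : 2 ≤ l) (hpar : k % 2 ≠ l % 2)
    (hodd : Odd k → 2 * l + 1 ≤ k) (heven : Even k → 2 * l - 2 ≤ k)
    (hd : 2 * d = 3 * k + l + 1) (hl23 : l = 2 ∨ l = 3)
    (x x' : ZMod (4 * k + 2 * l) → Fin d → Bool)
    (hx : IsCircuitCode d k (4 * k + 2 * l) x)
    (hx' : IsCircuitCode d k (4 * k + 2 * l) x')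
    (τ τ' : ZMod (4 * k + 2 * l) → Fin d)
    (hτ : IsTransitionSeq x τ) (hτ' : IsTransitionSeq x' τ')
    (hsym : ∀ i : ZMod (4 * k + 2 * l),
      τ (i + ((2 * k + l : ℕ) : ZMod (4 * k + 2 * l))) = τ i)
    (hsym' : ∀ i : ZMod (4 * k + 2 * l),
      τ' (i + ((2 * k + l : ℕ) : ZMod (4 * k + 2 * l))) = τ' i)
    (hrun : ∃ s : ZMod (4 * k + 2 * l), IsBitRun τ s (k + l))
    (hrun' : ∃ s : ZMod (4 * k + 2 * l), IsBitRun τ' s (k + l)) :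
    ∃ (s : ZMod (4 * k + 2 * l)) (π : Equiv.Perm (Fin d)),
      ∀ i : ZMod (4 * k + 2 * l), τ' i = π (τ (i + s)) :=
  stmt_8_general k l d hd hl23 x x' hx hx' τ τ' hτ hτ' hsym hsym' hrun hrun'
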